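/- (C1) If 0 ≤ x < y, then there exists θ with 1/(1+√(x/y)) ≤ θ ≤ 1 such that R_C(x,y) = π/(2√y) − √x/y + πxθ/(4y^{3/2}), with equalities in the bounds on θ iff x = 0. -/

import Mathlib

open MeasureTheory Real Set


noncomputable def RC (x y : ℝ) : ℝ :=
  (1/2) * ∫ t in Set.Ioi (0:ℝ), (t+x) ^ (-(1/2) : ℝ) * (t+y)⁻¹

lemma coreH {t : ℝ} (ht0 : 0 < t) (ht1 : t < 1) :
    2 * arctan t < (2*t/(1+t^2)) * (π/2 - (1-t^2)/(1+t^2) + (π/4)*((1-t^2)/(1+t^2))^2) := by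
  set F : ℝ → ℝ := fun t => ((3*π/2-2)*t + π*t^3 + (3*π/2+2)*t^5)/(1+t^2)^3 - 2*arctan t with hF
  have hq : ∀ s : ℝ, (0:ℝ) < 1 + s^2 := fun s => by positivity
  have hderiv : ∀ s : ℝ, HasDerivAt F
      ((1-s^2)^2*((3*π/2-4) - (3*π/2+4)*s^2)/(1+s^2)^4) s := by
    intro s
    have h1 : HasDerivAt (fun u:ℝ => 1+u^2) (2*s) s := by
      simpa using (hasDerivAt_pow 2 s).const_add 1
    have hD : HasDerivAt (fun u:ℝ => (1+u^2)^3) (3*(1+s^2)^2*(2*s)) s := by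
      refine (h1.pow 3).congr_deriv ?_
      norm_num
    have hN : HasDerivAt (fun u:ℝ => (3*π/2-2)*u + π*u^3 + (3*π/2+2)*u^5)
        ((3*π/2-2) + π*(3*s^2) + (3*π/2+2)*(5*s^4)) s := by
      have a := (hasDerivAt_id s).const_mul (3*π/2-2)
      have b := (hasDerivAt_pow 3 s).const_mul π
      have c := (hasDerivAt_pow 5 s).const_mul (3*π/2+2)
      refine ((a.add b).add c).congr_deriv ?_
      push_cast; ring
    have harc := (Real.hasDerivAt_arctan s).const_mul 2
    have := (hN.div hD (by positivity)).sub harc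
    refine this.congr_deriv (Eq.symm ?_)
    have hne := (hq s).ne'
    field_simp
    ring
  have hcont : Continuous F :=
    Differentiable.continuous (fun s => (hderiv s).differentiableAt)
  -- the sign-change point of the derivative
  set r : ℝ := Real.sqrt ((3*π-8)/(3*π+8)) with hr
  have h8 : (0:ℝ) < 3*π - 8 := by nlinarith [Real.pi_gt_three]
  have h8' : (0:ℝ) < 3*π + 8 := by positivity
  have hr2 : r^2 = (3*π-8)/(3*π+8) := Real.sq_sqrt (by positivity)
  have hr0 : 0 < r := Real.sqrt_pos.mpr (by positivity)
  have hr1 : r < 1 := by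
    rw [hr]
    have : (3*π-8)/(3*π+8) < 1 := by rw [div_lt_one h8']; linarith
    calc Real.sqrt ((3*π-8)/(3*π+8)) < Real.sqrt 1 := by
          exact Real.sqrt_lt_sqrt (by positivity) this
      _ = 1 := Real.sqrt_one
  have hF0 : F 0 = 0 := by simp [hF]
  have hF1 : F 1 = 0 := by
    have : arctan 1 = π/4 := Real.arctan_one
    rw [hF]; simp only [this]; norm_num; ring
  have hmono : StrictMonoOn F (Icc 0 r) := by
    apply strictMonoOn_of_deriv_pos (convex_Icc _ _) hcont.continuousOn
    intro s hs
    rw [interior_Icc] at hs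
    rw [(hderiv s).deriv]
    have hs2 : s^2 < r^2 := by
      have := hs.2
      nlinarith [hs.1]
    rw [hr2] at hs2
    have h1 : 0 < (3*π/2-4) - (3*π/2+4)*s^2 := by
      rw [lt_div_iff₀ h8'] at hs2
      nlinarith
    have hs1 : s < 1 := lt_trans hs.2 hr1
    have : (0:ℝ) < (1-s^2)^2 := pow_pos (by nlinarith [hs.1]) 2
    positivity
  have hanti : StrictAntiOn F (Icc r 1) := by
    apply strictAntiOn_of_deriv_neg (convex_Icc _ _) hcont.continuousOn
    intro s hs
    rw [interior_Icc] at hs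
    rw [(hderiv s).deriv]
    have hs2 : r^2 < s^2 := by nlinarith [hs.1, hs.2, hr0]
    rw [hr2] at hs2
    have h1 : (3*π/2-4) - (3*π/2+4)*s^2 < 0 := by
      rw [div_lt_iff₀ h8'] at hs2
      nlinarith
    have : (0:ℝ) < (1-s^2)^2 := by
      have h2 : s^2 < 1 := by nlinarith [hs.1, hs.2, hr0]
      exact pow_pos (by nlinarith) 2
    have hq4 : (0:ℝ) < (1+s^2)^4 := by positivity
    exact div_neg_of_neg_of_pos (by nlinarith) hq4
  have hFpos : 0 < F t := by
    rcases le_or_gt t r with h | h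
    · have := hmono (left_mem_Icc.mpr hr0.le) ⟨ht0.le, h⟩ ht0
      rwa [hF0] at this
    · have := hanti ⟨h.le, ht1.le⟩ (right_mem_Icc.mpr hr1.le) ht1
      rwa [hF1] at this
  -- convert F t > 0 to the stated inequality
  have hqt := (hq t).ne'
  have key : ((3*π/2-2)*t + π*t^3 + (3*π/2+2)*t^5)/(1+t^2)^3
      = (2*t/(1+t^2)) * (π/2 - (1-t^2)/(1+t^2) + (π/4)*((1-t^2)/(1+t^2))^2) := by
    field_simp
    ring
  rw [hF] at hFpos
  simp only [sub_pos] at hFpos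
  linarith [hFpos, key.symm.le, key.le, key ▸ hFpos]

lemma coreK {t : ℝ} (ht0 : 0 < t) (ht1 : t < 1) :
    (2*t/(1+t^2)) * (π/2 - (1-t^2)/(1+t^2)) + (π/4)*((1-t^2)/(1+t^2))^2 * t
      < 2 * arctan t := by
  set F : ℝ → ℝ := fun t => 2*arctan t - ((5*π/4-2)*t + (π/2+2)*t^3 + (π/4)*t^5)/(1+t^2)^2
    with hF
  have hq : ∀ s : ℝ, (0:ℝ) < 1 + s^2 := fun s => by positivity
  have hderiv : ∀ s : ℝ, HasDerivAt F
      ((1-s^2)^2*((4-5*π/4) - (π/4)*s^2)/(1+s^2)^3) s := by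
    intro s
    have h1 : HasDerivAt (fun u:ℝ => 1+u^2) (2*s) s := by
      simpa using (hasDerivAt_pow 2 s).const_add 1
    have hD : HasDerivAt (fun u:ℝ => (1+u^2)^2) (2*(1+s^2)*(2*s)) s := by
      refine (h1.pow 2).congr_deriv ?_
      norm_num
    have hN : HasDerivAt (fun u:ℝ => (5*π/4-2)*u + (π/2+2)*u^3 + (π/4)*u^5)
        ((5*π/4-2) + (π/2+2)*(3*s^2) + (π/4)*(5*s^4)) s := by
      have a := (hasDerivAt_id s).const_mul (5*π/4-2)
      have b := (hasDerivAt_pow 3 s).const_mul (π/2+2)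
      have c := (hasDerivAt_pow 5 s).const_mul (π/4)
      refine ((a.add b).add c).congr_deriv ?_
      push_cast; ring
    have harc := (Real.hasDerivAt_arctan s).const_mul 2
    have := harc.sub (hN.div hD (by positivity))
    refine this.congr_deriv (Eq.symm ?_)
    have hne := (hq s).ne'
    field_simp
    ring
  have hcont : Continuous F :=
    Differentiable.continuous (fun s => (hderiv s).differentiableAt)
  set r : ℝ := Real.sqrt ((16-5*π)/π) with hr
  have h8 : (0:ℝ) < 16 - 5*π := by nlinarith [Real.pi_lt_d2]
  have hpi : (0:ℝ) < π := Real.pi_pos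
  have hr2 : r^2 = (16-5*π)/π := Real.sq_sqrt (by positivity)
  have hr0 : 0 < r := Real.sqrt_pos.mpr (by positivity)
  have hr1 : r < 1 := by
    rw [hr]
    have : (16-5*π)/π < 1 := by rw [div_lt_one hpi]; nlinarith [Real.pi_gt_three]
    calc Real.sqrt ((16-5*π)/π) < Real.sqrt 1 := Real.sqrt_lt_sqrt (by positivity) this
      _ = 1 := Real.sqrt_one
  have hF0 : F 0 = 0 := by simp [hF]
  have hF1 : F 1 = 0 := by
    have : arctan 1 = π/4 := Real.arctan_one
    rw [hF]; simp only [this]; norm_num; ring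
  have hmono : StrictMonoOn F (Icc 0 r) := by
    apply strictMonoOn_of_deriv_pos (convex_Icc _ _) hcont.continuousOn
    intro s hs
    rw [interior_Icc] at hs
    rw [(hderiv s).deriv]
    have hs2 : s^2 < r^2 := by nlinarith [hs.1, hs.2]
    rw [hr2] at hs2
    have h1 : 0 < (4-5*π/4) - (π/4)*s^2 := by
      rw [lt_div_iff₀ hpi] at hs2
      nlinarith
    have hs1 : s < 1 := lt_trans hs.2 hr1
    have h5 : (0:ℝ) < 1 - s^2 := by nlinarith [hs.1]
    have : (0:ℝ) < (1-s^2)^2 := pow_pos h5 2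
    positivity
  have hanti : StrictAntiOn F (Icc r 1) := by
    apply strictAntiOn_of_deriv_neg (convex_Icc _ _) hcont.continuousOn
    intro s hs
    rw [interior_Icc] at hs
    rw [(hderiv s).deriv]
    have hs2 : r^2 < s^2 := by nlinarith [hs.1, hs.2, hr0]
    rw [hr2] at hs2
    have h1 : (4-5*π/4) - (π/4)*s^2 < 0 := by
      rw [div_lt_iff₀ hpi] at hs2
      nlinarith
    have h2 : s^2 < 1 := by nlinarith [hs.1, hs.2, hr0]
    have h3 : (0:ℝ) < (1-s^2)^2 := pow_pos (by nlinarith) 2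
    have hq3 : (0:ℝ) < (1+s^2)^3 := by positivity
    exact div_neg_of_neg_of_pos (by nlinarith) hq3
  have hFpos : 0 < F t := by
    rcases le_or_gt t r with h | h
    · have := hmono (left_mem_Icc.mpr hr0.le) ⟨ht0.le, h⟩ ht0
      rwa [hF0] at this
    · have := hanti ⟨h.le, ht1.le⟩ (right_mem_Icc.mpr hr1.le) ht1
      rwa [hF1] at this
  have hqt := (hq t).ne'
  have key : ((5*π/4-2)*t + (π/2+2)*t^3 + (π/4)*t^5)/(1+t^2)^2
      = (2*t/(1+t^2)) * (π/2 - (1-t^2)/(1+t^2)) + (π/4)*((1-t^2)/(1+t^2))^2 * t := by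
    field_simp
    ring
  rw [hF, sub_pos, key] at hFpos
  exact hFpos

lemma sqrt_tendsto_atTop : Filter.Tendsto Real.sqrt Filter.atTop Filter.atTop := by
  apply Filter.tendsto_atTop_atTop.mpr
  intro b
  refine ⟨max 0 (b^2), fun a ha => ?_⟩
  have h0 : (0:ℝ) ≤ a := le_trans (le_max_left _ _) ha
  have h1 : b^2 ≤ a := le_trans (le_max_right _ _) ha
  calc b ≤ |b| := le_abs_self b
    _ = Real.sqrt (b^2) := (Real.sqrt_sq_eq_abs b).symm
    _ ≤ Real.sqrt a := Real.sqrt_le_sqrt h1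

lemma RC_closed_form (x y : ℝ) (hx : 0 ≤ x) (hxy : x < y) :
    RC x y = (π/2 - arctan (Real.sqrt x / Real.sqrt (y-x))) / Real.sqrt (y-x) := by
  have ha : 0 < y - x := sub_pos.mpr hxy
  have hy : 0 < y := lt_of_le_of_lt hx hxy
  set sa : ℝ := Real.sqrt (y-x) with hsa
  have hsa0 : 0 < sa := Real.sqrt_pos.mpr ha
  have hsa2 : sa^2 = y - x := Real.sq_sqrt ha.le
  set F : ℝ → ℝ := fun t => (2/sa) * arctan (Real.sqrt (t+x) / sa) with hF
  have hcont : ContinuousWithinAt F (Ici 0) 0 := by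
    apply Continuous.continuousWithinAt
    exact continuous_const.mul (Real.continuous_arctan.comp
      ((Real.continuous_sqrt.comp (continuous_id.add continuous_const)).div_const sa))
  have hderiv : ∀ t ∈ Ioi (0:ℝ), HasDerivAt F ((t+x) ^ (-(1/2):ℝ) * (t+y)⁻¹) t := by
    intro t ht
    rw [mem_Ioi] at ht
    have htx : 0 < t + x := by linarith
    have hst : 0 < Real.sqrt (t+x) := Real.sqrt_pos.mpr htx
    have hsq : Real.sqrt (t+x) ^ 2 = t + x := Real.sq_sqrt htx.le
    have h1 : HasDerivAt (fun u:ℝ => u + x) 1 t := (hasDerivAt_id t).add_const x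
    have h2 : HasDerivAt (fun u:ℝ => Real.sqrt (u+x)) (1/(2*Real.sqrt (t+x))) t := by
      refine ((Real.hasDerivAt_sqrt htx.ne').comp t h1).congr_deriv ?_
      ring
    have h3 := ((Real.hasDerivAt_arctan (Real.sqrt (t+x)/sa)).comp t
      (h2.div_const sa)).const_mul (2/sa)
    refine h3.congr_deriv (Eq.symm ?_)
    have hrw : (t+x) ^ (-(1/2):ℝ) = (Real.sqrt (t+x))⁻¹ := by
      rw [Real.rpow_neg htx.le, Real.sqrt_eq_rpow]
    rw [hrw]
    have hty : (0:ℝ) < t + y := by linarith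
    field_simp
    nlinarith [hsq, hsa2, hst, hsa0, sq_nonneg (Real.sqrt (t+x) * sa)]
  have hnonneg : ∀ t ∈ Ioi (0:ℝ), 0 ≤ (t+x) ^ (-(1/2):ℝ) * (t+y)⁻¹ := by
    intro t ht
    rw [mem_Ioi] at ht
    have : (0:ℝ) < t + y := by linarith
    positivity
  have htends : Filter.Tendsto F Filter.atTop (nhds ((2/sa) * (π/2))) := by
    have l1 : Filter.Tendsto (fun t:ℝ => Real.sqrt (t+x) / sa) Filter.atTop Filter.atTop := by
      apply Filter.Tendsto.atTop_div_const hsa0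
      exact sqrt_tendsto_atTop.comp (Filter.tendsto_atTop_add_const_right _ x Filter.tendsto_id)
    have l2 := Real.tendsto_arctan_atTop.mono_right nhdsWithin_le_nhds
    exact (l2.comp l1).const_mul (2/sa)
  have key := integral_Ioi_of_hasDerivAt_of_nonneg hcont hderiv hnonneg htends
  rw [RC, key, hF]
  simp only [zero_add]
  field_simp

/-- (C1): asymptotic approximation of `R_C(x,y)` for `x ≪ y`. -/
theorem RC_asymp_x_lt_y (x y : ℝ) (hx : 0 ≤ x) (hxy : x < y) :
    ∃ θ : ℝ, 1 / (1 + Real.sqrt (x / y)) ≤ θ ∧ θ ≤ 1 ∧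
      RC x y = π / (2 * Real.sqrt y) - Real.sqrt x / y
        + π * x * θ / (4 * y ^ ((3:ℝ)/2)) ∧
      (x ≠ 0 → 1 / (1 + Real.sqrt (x / y)) < θ ∧ θ < 1) := by
  have hy : 0 < y := lt_of_le_of_lt hx hxy
  have hy32 : y ^ ((3:ℝ)/2) = y * Real.sqrt y := by
    rw [show ((3:ℝ)/2) = 1 + 1/2 by norm_num, Real.rpow_add hy, Real.rpow_one,
      ← Real.sqrt_eq_rpow]
  rcases eq_or_lt_of_le hx with hx0 | hxpos
  · -- x = 0
    refine ⟨1, ?_, le_rfl, ?_, fun h => absurd hx0.symm h⟩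
    · rw [← hx0]
      simp
    · rw [← hx0, RC_closed_form 0 y le_rfl (by linarith)]
      simp
      ring
  · -- x > 0
    set sx : ℝ := Real.sqrt x with hsxd
    set sy : ℝ := Real.sqrt y with hsyd
    set ssa : ℝ := Real.sqrt (y - x) with hsad
    have ha : 0 < y - x := sub_pos.mpr hxy
    have hsx0 : 0 < sx := Real.sqrt_pos.mpr hxpos
    have hsy0 : 0 < sy := Real.sqrt_pos.mpr hy
    have hsa0 : 0 < ssa := Real.sqrt_pos.mpr ha
    have hsx2 : sx^2 = x := Real.sq_sqrt hx
    have hsy2 : sy^2 = y := Real.sq_sqrt hy.le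
    have hsa2 : ssa^2 = y - x := Real.sq_sqrt ha.le
    have hsum : 0 < sy + sx := by linarith
    have hsalt : ssa < sy := by
      rw [hsad, hsyd]
      exact Real.sqrt_lt_sqrt (by linarith) (by linarith)
    set t₀ : ℝ := ssa / (sy + sx) with ht₀d
    have ht0 : 0 < t₀ := div_pos hsa0 hsum
    have ht1 : t₀ < 1 := by
      rw [ht₀d, div_lt_one hsum]; linarith
    have h2 : t₀^2 = (sy - sx)/(sy + sx) := by
      rw [ht₀d, div_pow, div_eq_div_iff (by positivity) hsum.ne']
      linear_combination (sy+sx)*(hsa2 - hsy2 + hsx2)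
    have hq0 : 1 + t₀^2 = 2*sy/(sy+sx) := by
      rw [h2]
      field_simp
      ring
    have h1mt : 1 - t₀^2 = 2*sx/(sy+sx) := by
      rw [h2]
      field_simp
      ring
    have hs0 : 2*t₀/(1+t₀^2) = ssa/sy := by
      rw [hq0, ht₀d]
      field_simp
    have hc0 : (1-t₀^2)/(1+t₀^2) = sx/sy := by
      rw [h1mt, hq0]
      field_simp
    have hC : 2*arctan t₀ = π/2 - arctan (sx/ssa) := by
      have hmul : t₀*t₀ < 1 := by nlinarith
      have hadd := Real.arctan_add hmul
      have harg : (t₀+t₀)/(1-t₀*t₀) = ssa/sx := by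
        rw [show t₀*t₀ = t₀^2 by ring, h1mt, ht₀d]
        field_simp
        ring
      have hinv : arctan (ssa/sx) = π/2 - arctan (sx/ssa) := by
        rw [show ssa/sx = (sx/ssa)⁻¹ by rw [inv_div]]
        exact Real.arctan_inv_of_pos (div_pos hsx0 hsa0)
      rw [two_mul, hadd, harg, hinv]
    have hRC : RC x y = (2*arctan t₀)/ssa := by
      rw [RC_closed_form x y hx hxy, ← hsxd, ← hsad, hC]
    -- upper bound
    have hH := coreH ht0 ht1
    rw [hs0, hc0] at hH
    have hupper : RC x y < π/(2*sy) - sx/y + π*x/(4*y^((3:ℝ)/2)) := by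
      rw [hRC]
      have hid : (ssa/sy * (π/2 - sx/sy + π/4*(sx/sy)^2))/ssa
          = π/(2*sy) - sx/y + π*x/(4*y^((3:ℝ)/2)) := by
        rw [hy32, ← hsx2, ← hsy2]
        field_simp
      rw [← hid]
      exact div_lt_div_of_pos_right hH hsa0
    -- lower bound
    have hK := coreK ht0 ht1
    rw [hs0, hc0] at hK
    have hlower : π/(2*sy) - sx/y + π*x/(4*y^((3:ℝ)/2)) * (1/(1+Real.sqrt (x/y))) < RC x y := by
      rw [hRC]
      have hxyq : Real.sqrt (x/y) = sx/sy := by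
        rw [hsxd, hsyd]
        exact Real.sqrt_div hx y
      have hid : (ssa/sy * (π/2 - sx/sy) + π/4*(sx/sy)^2 * t₀)/ssa
          = π/(2*sy) - sx/y + π*x/(4*y^((3:ℝ)/2)) * (1/(1+Real.sqrt (x/y))) := by
        rw [hxyq, hy32, ht₀d, ← hsx2, ← hsy2]
        have h1c : (0:ℝ) < 1 + sx/sy := by positivity
        field_simp
      rw [← hid]
      exact div_lt_div_of_pos_right hK hsa0
    -- assemble
    set y32 : ℝ := y ^ ((3:ℝ)/2) with hy32d
    have hy32pos : 0 < y32 := by rw [hy32]; positivity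
    have hD : 0 < π*x/(4*y32) := by
      have := Real.pi_pos
      positivity
    set D : ℝ := π*x/(4*y32) with hDd
    set base : ℝ := π/(2*sy) - sx/y with hbased
    refine ⟨(RC x y - base)/D, ?_, ?_, ?_, fun _ => ⟨?_, ?_⟩⟩
    · apply le_of_lt
      rw [lt_div_iff₀ hD]
      have : base + D * (1/(1+Real.sqrt (x/y))) < RC x y := by
        calc base + D * (1/(1+Real.sqrt (x/y)))
            = π/(2*sy) - sx/y + π*x/(4*y^((3:ℝ)/2)) * (1/(1+Real.sqrt (x/y))) := by
              rw [hbased, hDd, hy32d]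
          _ < RC x y := hlower
      linarith [this]
    · apply le_of_lt
      rw [div_lt_one hD]
      have : RC x y < base + D := by
        calc RC x y < π/(2*sy) - sx/y + π*x/(4*y^((3:ℝ)/2)) := hupper
          _ = base + D := by rw [hbased, hDd, hy32d]
      linarith
    · have hDne : D ≠ 0 := hD.ne'
      have e1 : π * x * ((RC x y - base)/D) / (4*y32) = (RC x y - base)/D * D := by
        rw [hDd]; ring
      rw [e1, div_mul_cancel₀ _ hDne, hbased]
      ring
    · rw [lt_div_iff₀ hD]
      have : base + D * (1/(1+Real.sqrt (x/y))) < RC x y := by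
        calc base + D * (1/(1+Real.sqrt (x/y)))
            = π/(2*sy) - sx/y + π*x/(4*y^((3:ℝ)/2)) * (1/(1+Real.sqrt (x/y))) := by
              rw [hbased, hDd, hy32d]
          _ < RC x y := hlower
      linarith
    · rw [div_lt_one hD]
      have : RC x y < base + D := by
        calc RC x y < π/(2*sy) - sx/y + π*x/(4*y^((3:ℝ)/2)) := hupper
          _ = base + D := by rw [hbased, hDd, hy32d]
      linarith
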